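/- Let T be an interval exchange transformation over I without connection of length ≥ 1. Let w ∈ L(T) and a, b ∈ L_{L(T)}(w) (resp. a, b ∈ R_{L(T)}(w)). Then the vertices 1⊗a and 1⊗b (resp. a⊗1 and b⊗1) lie in the same connected component of the extension graph E(w) if and only if J_a and J_b (resp. I_a and I_b) lie in the same component of I. -/

import Mathlib

namespace Paper

/-- An interval exchange transformation (with flips) on the open interval `]l, r[`,
with intervals indexed by the finite alphabet `A` : the families `(Ia a)` and `(Ja a)`
are partitions of `]l, r[` minus `Card A - 1` points into nonempty open intervals
(pairwise disjoint, hence ordered by suitable total orders on `A`), with `Ia a` and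
`Ja a` of the same length, and the restriction of `T` to `Ia a` is either a translation
or a symmetry from `Ia a` onto `Ja a`. -/
structure IET (A : Type*) [Fintype A] where
  l : ℝ
  r : ℝ
  hlr : l < r
  Ia : A → Set ℝ
  Ja : A → Set ℝ
  T : ℝ → ℝ
  hIa : ∀ a, ∃ p q : ℝ, p < q ∧ Ia a = Set.Ioo p q
  hJa : ∀ a, ∃ p q : ℝ, p < q ∧ Ja a = Set.Ioo p q
  hIsub : ∀ a, Ia a ⊆ Set.Ioo l r
  hJsub : ∀ a, Ja a ⊆ Set.Ioo l r
  hIdisj : Pairwise (Function.onFun Disjoint Ia)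
  hJdisj : Pairwise (Function.onFun Disjoint Ja)
  hIcard : (Set.Ioo l r \ ⋃ a, Ia a).ncard = Fintype.card A - 1
  hJcard : (Set.Ioo l r \ ⋃ a, Ja a).ncard = Fintype.card A - 1
  hlen : ∀ a, MeasureTheory.volume (Ia a) = MeasureTheory.volume (Ja a)
  hTimage : ∀ a, T '' Ia a = Ja a
  hTiso : ∀ a, (∃ t : ℝ, ∀ x ∈ Ia a, T x = x + t) ∨ (∃ s : ℝ, ∀ x ∈ Ia a, T x = s - x)

namespace IET

variable {A : Type*} [Fintype A] (E : IET A)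

/-- The interval `I_w` of points whose orbit starts by visiting the intervals
prescribed by the word `w` (with `I_ε = ]l, r[`). -/
def Iw (w : List A) : Set ℝ :=
  {x ∈ Set.Ioo E.l E.r | ∀ i : Fin w.length, E.T^[(i : ℕ)] x ∈ E.Ia (w.get i)}

/-- `J_w = T^{|w|}(I_w)`. -/
def Jw (w : List A) : Set ℝ := E.T^[w.length] '' E.Iw w

/-- The natural coding language `L(T)`: the set of factors of the natural codings
`Σ_T(z)` of points `z` whose whole orbit stays in `⋃ a, I_a`. -/
def lang : Set (List A) :=
  {w | ∃ z ∈ Set.Ioo E.l E.r, (∀ n : ℕ, E.T^[n] z ∈ ⋃ a, E.Ia a) ∧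
        ∃ k : ℕ, ∀ i : Fin w.length, E.T^[k + (i : ℕ)] z ∈ E.Ia (w.get i)}

/-- The singularities of `T`: the points of `]l, r[` separating the intervals `I_a`. -/
def singT : Set ℝ := Set.Ioo E.l E.r \ ⋃ a, E.Ia a

/-- The singularities of `T⁻¹`: the points of `]l, r[` separating the intervals `J_a`. -/
def singTinv : Set ℝ := Set.Ioo E.l E.r \ ⋃ a, E.Ja a

/-- A connection of length `n`: a triple `(x, y, n)` where `x` is a singularity of
`T⁻¹`, `y` is a singularity of `T`, and `Tⁿ x = y`, the orbit of `x` being defined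
up to time `n`. -/
def IsConnection (x y : ℝ) (n : ℕ) : Prop :=
  x ∈ E.singTinv ∧ y ∈ E.singT ∧ E.T^[n] x = y ∧ ∀ i < n, E.T^[i] x ∉ E.singT

end IET

variable {A : Type*}

/-- The vertex set of the extension graph of `w` : the disjoint union of (a copy of)
`L_S(w)` and (a copy of) `R_S(w)`. -/
def extVerts (S : Set (List A)) (w : List A) : Set (A ⊕ A) :=
  {v | Sum.elim (fun a => a :: w ∈ S) (fun b => w ++ [b] ∈ S) v}

/-- The edge relation of the extension graph of `w`: `1 ⊗ a` is joined to `b ⊗ 1`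
whenever `awb ∈ S`. -/
def extRel (S : Set (List A)) (w : List A) : (A ⊕ A) → (A ⊕ A) → Prop :=
  fun u v => ∃ a b : A, u = Sum.inl a ∧ v = Sum.inr b ∧ a :: (w ++ [b]) ∈ S

/-- The extension graph `E(w)` of `w` with respect to `S`. -/
def extGraph (S : Set (List A)) (w : List A) : SimpleGraph (extVerts S w) :=
  SimpleGraph.induce (extVerts S w) (SimpleGraph.fromRel (extRel S w))

end Paper

/-!
Inside the cylinder `I_w`, attach to the vertex `1 ⊗ c` of `E(w)` the open interval
`J_c ∩ I_w = T(I_{cw})` and to `d ⊗ 1` the interval `I_{wd}`. As only countably many orbits meet a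
singularity, the intervals of `1 ⊗ c` and `d ⊗ 1` meet iff `cwd ∈ L(T)`. Off the connections of
length `0` these intervals cover `I_w`: a singularity `x ∈ I_w` of `T⁻¹` such that `T^{|w|} x` is a
singularity of `T` is a connection of length `|w|`, so `|w| = 0`. Hence a segment of `I_w` lying in
one component of `I` only meets intervals of vertices from one connected component of `E(w)`.
Conversely, an edge joins two intervals that meet, hence lie in a common component of `I`.
-/

open Set

theorem SimpleGraph.Reachable.eq_of_forall_adj {V β : Type*} {G : SimpleGraph V} {f : V → β}
    (hf : ∀ u v, G.Adj u v → f u = f v) {u v : V} (h : G.Reachable u v) : f u = f v := by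
  have := ((G.reachable_iff_reflTransGen u v).1 h).lift f hf
  rwa [Relation.reflTransGen_eq_self] at this

section ConnectedComponentIn

variable {X : Type*} [TopologicalSpace X] {s C : Set X} {x y : X}

theorem connectedComponentIn_eq_of_isPreconnected (hC : IsPreconnected C) (hCs : C ⊆ s)
    (hx : x ∈ C) (hy : y ∈ C) : connectedComponentIn s x = connectedComponentIn s y :=
  connectedComponentIn_eq (hC.subset_connectedComponentIn hx hCs hy)

theorem image_connectedComponentIn_of_isPreconnected (hC : IsPreconnected C) (hCs : C ⊆ s)
    (hx : x ∈ C) : connectedComponentIn s '' C = {connectedComponentIn s x} := by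
  ext K
  constructor
  · rintro ⟨y, hy, rfl⟩
    exact (connectedComponentIn_eq_of_isPreconnected hC hCs hx hy).symm
  · rintro rfl
    exact ⟨x, hx, rfl⟩

end ConnectedComponentIn

theorem uIcc_subset_of_connectedComponentIn_eq {α : Type*} [LinearOrder α] [TopologicalSpace α]
    [OrderClosedTopology α] {s : Set α} {x y : α} (hx : x ∈ s) (hy : y ∈ s)
    (h : connectedComponentIn s x = connectedComponentIn s y) : uIcc x y ⊆ s := by
  refine (isPreconnected_connectedComponentIn.ordConnected.uIcc_subset
    (mem_connectedComponentIn hx) ?_).trans (connectedComponentIn_subset s x)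
  exact h ▸ mem_connectedComponentIn hy

namespace Paper

section ExtensionGraph

variable {A : Type*} {S : Set (List A)} {w : List A}

theorem extGraph_adj_inl_inr {c d : A} (h : c :: (w ++ [d]) ∈ S)
    (hc : Sum.inl c ∈ extVerts S w) (hd : Sum.inr d ∈ extVerts S w) :
    (extGraph S w).Adj ⟨_, hc⟩ ⟨_, hd⟩ :=
  (SimpleGraph.fromRel_adj _ _ _).2 ⟨Sum.inl_ne_inr, Or.inl ⟨c, d, rfl, rfl, h⟩⟩

theorem extGraph_reachable_map_eq {β : Type*} (φ : A ⊕ A → β)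
    (hφ : ∀ c d, c :: (w ++ [d]) ∈ S → φ (Sum.inl c) = φ (Sum.inr d))
    {u v : extVerts S w} (h : (extGraph S w).Reachable u v) : φ u = φ v := by
  refine h.eq_of_forall_adj (f := fun u => φ u.1) fun u v huv => ?_
  obtain ⟨-, ⟨c, d, hu, hv, hcd⟩ | ⟨c, d, hv, hu, hcd⟩⟩ :=
    (SimpleGraph.fromRel_adj _ _ _).1 (SimpleGraph.induce_adj.1 huv)
  · rw [hu, hv]
    exact hφ c d hcd
  · rw [hu, hv]
    exact (hφ c d hcd).symm

end ExtensionGraph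

namespace IET

variable {A : Type*} [Fintype A] {E : IET A} {a b c d : A} {v w : List A} {x y : ℝ}

theorem isOpen_Ia : IsOpen (E.Ia a) := by
  obtain ⟨p, q, -, h⟩ := E.hIa a
  exact h ▸ isOpen_Ioo

theorem isOpen_Ja : IsOpen (E.Ja a) := by
  obtain ⟨p, q, -, h⟩ := E.hJa a
  exact h ▸ isOpen_Ioo

theorem ordConnected_Ia : (E.Ia a).OrdConnected := by
  obtain ⟨p, q, -, h⟩ := E.hIa a
  exact h ▸ ordConnected_Ioo

theorem ordConnected_Ja : (E.Ja a).OrdConnected := by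
  obtain ⟨p, q, -, h⟩ := E.hJa a
  exact h ▸ ordConnected_Ioo

theorem Ja_nonempty : (E.Ja a).Nonempty := by
  obtain ⟨p, q, hpq, h⟩ := E.hJa a
  exact h ▸ nonempty_Ioo.2 hpq

theorem Ia_subset_Ioo : E.Ia a ⊆ Ioo E.l E.r := E.hIsub a

theorem Ja_subset_Ioo : E.Ja a ⊆ Ioo E.l E.r := E.hJsub a

theorem T_mem_Ja (hx : x ∈ E.Ia a) : E.T x ∈ E.Ja a :=
  E.hTimage a ▸ mem_image_of_mem E.T hx

theorem eq_of_mem_Ia (ha : x ∈ E.Ia a) (hb : x ∈ E.Ia b) : a = b :=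
  E.hIdisj.eq (not_disjoint_iff.2 ⟨x, ha, hb⟩)

theorem eq_of_mem_Ja (ha : x ∈ E.Ja a) (hb : x ∈ E.Ja b) : a = b :=
  E.hJdisj.eq (not_disjoint_iff.2 ⟨x, ha, hb⟩)

theorem continuousOn_T : ContinuousOn E.T (E.Ia a) := by
  rcases E.hTiso a with ⟨t, ht⟩ | ⟨s, hs⟩
  · exact (continuous_id.add continuous_const).continuousOn.congr ht
  · exact (continuous_const.sub continuous_id).continuousOn.congr hs

theorem T_mem_uIcc (hx : x ∈ E.Ia a) (hy : y ∈ E.Ia a) {z : ℝ} (hz : z ∈ uIcc x y) :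
    E.T z ∈ uIcc (E.T x) (E.T y) := by
  have hzI : z ∈ E.Ia a := ordConnected_Ia.uIcc_subset hx hy hz
  rw [mem_uIcc] at hz ⊢
  rcases E.hTiso a with ⟨t, ht⟩ | ⟨s, hs⟩
  · rw [ht x hx, ht y hy, ht z hzI]
    rcases hz with ⟨h₁, h₂⟩ | ⟨h₁, h₂⟩
    · exact Or.inl ⟨by linarith, by linarith⟩
    · exact Or.inr ⟨by linarith, by linarith⟩
  · rw [hs x hx, hs y hy, hs z hzI]
    rcases hz with ⟨h₁, h₂⟩ | ⟨h₁, h₂⟩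
    · exact Or.inr ⟨by linarith, by linarith⟩
    · exact Or.inl ⟨by linarith, by linarith⟩

theorem injOn_T : InjOn E.T (⋃ a, E.Ia a) := by
  intro x hx y hy hxy
  obtain ⟨a, hxa⟩ := mem_iUnion.1 hx
  obtain ⟨b, hyb⟩ := mem_iUnion.1 hy
  obtain rfl : a = b := eq_of_mem_Ja (T_mem_Ja hxa) (hxy ▸ T_mem_Ja hyb)
  rcases E.hTiso a with ⟨t, ht⟩ | ⟨s, hs⟩
  · linarith [ht x hxa, ht y hyb]
  · linarith [hs x hxa, hs y hyb]

theorem injOn_iterate (n : ℕ) :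
    InjOn E.T^[n] {x | ∀ i < n, E.T^[i] x ∈ ⋃ a, E.Ia a} := by
  induction n with
  | zero => exact injOn_id _
  | succ n ih =>
    intro x hx y hy hxy
    simp only [Function.iterate_succ_apply] at hxy
    have shift {z} (hz : z ∈ {x | ∀ i < n + 1, E.T^[i] x ∈ ⋃ a, E.Ia a}) :
        E.T z ∈ {x | ∀ i < n, E.T^[i] x ∈ ⋃ a, E.Ia a} := fun i hi => by
      simpa only [Function.iterate_succ_apply] using hz (i + 1) (by omega)
    exact injOn_T (hx 0 n.succ_pos) (hy 0 n.succ_pos) (ih (shift hx) (shift hy) hxy)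

theorem iterate_mem_Ioo {n : ℕ} (hx : x ∈ Ioo E.l E.r)
    (h : ∀ i < n, E.T^[i] x ∈ ⋃ a, E.Ia a) : E.T^[n] x ∈ Ioo E.l E.r := by
  cases n with
  | zero => exact hx
  | succ n =>
    obtain ⟨a, ha⟩ := mem_iUnion.1 (h n n.lt_succ_self)
    rw [Function.iterate_succ_apply']
    exact Ja_subset_Ioo (T_mem_Ja ha)

theorem Iw_subset_Ioo : E.Iw w ⊆ Ioo E.l E.r := fun _ hx => hx.1

theorem Iw_nil : E.Iw [] = Ioo E.l E.r := by
  ext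
  simp [Iw]

theorem mem_Iw_cons : x ∈ E.Iw (c :: w) ↔ x ∈ E.Ia c ∧ E.T x ∈ E.Iw w := by
  simp only [Iw, mem_sep_iff, List.length_cons, Fin.forall_fin_succ, Fin.val_zero,
    Function.iterate_zero_apply, List.get_cons_zero, Fin.val_succ, Function.iterate_succ_apply]
  exact ⟨fun ⟨_, h₀, h⟩ => ⟨h₀, Ja_subset_Ioo (T_mem_Ja h₀), h⟩,
    fun ⟨h₀, _, h⟩ => ⟨Ia_subset_Ioo h₀, h₀, h⟩⟩

theorem mem_Iw_append :
    x ∈ E.Iw (v ++ w) ↔ x ∈ E.Iw v ∧ E.T^[v.length] x ∈ E.Iw w := by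
  induction v generalizing x with
  | nil => simpa [Iw_nil] using fun hx => Iw_subset_Ioo hx
  | cons c v ih =>
    rw [List.cons_append, mem_Iw_cons, mem_Iw_cons, ih, List.length_cons,
      Function.iterate_succ_apply, and_assoc]

theorem mem_Iw_singleton : x ∈ E.Iw [c] ↔ x ∈ E.Ia c := by
  rw [mem_Iw_cons, Iw_nil]
  exact ⟨And.left, fun hx => ⟨hx, Ja_subset_Ioo (T_mem_Ja hx)⟩⟩

theorem mem_Iw_append_singleton :
    x ∈ E.Iw (w ++ [d]) ↔ x ∈ E.Iw w ∧ E.T^[w.length] x ∈ E.Ia d := by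
  rw [mem_Iw_append, mem_Iw_singleton]

theorem image_T_Iw_cons : E.T '' E.Iw (c :: w) = E.Ja c ∩ E.Iw w := by
  ext y
  constructor
  · rintro ⟨x, hx, rfl⟩
    rw [mem_Iw_cons] at hx
    exact ⟨T_mem_Ja hx.1, hx.2⟩
  · rintro ⟨hy, hyw⟩
    rw [← E.hTimage c] at hy
    obtain ⟨x, hx, rfl⟩ := hy
    exact ⟨x, mem_Iw_cons.2 ⟨hx, hyw⟩, rfl⟩

theorem Iw_subset_Ia_head (hv : v ≠ []) : E.Iw v ⊆ E.Ia (v.head hv) := by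
  cases v with
  | nil => exact absurd rfl hv
  | cons c v => exact fun x hx => (mem_Iw_cons.1 hx).1

theorem iterate_mem_Ja_getLast (hv : v ≠ []) (hx : x ∈ E.Iw v) :
    E.T^[v.length] x ∈ E.Ja (v.getLast hv) := by
  induction v generalizing x with
  | nil => exact absurd rfl hv
  | cons c v ih =>
    rw [mem_Iw_cons] at hx
    cases v with
    | nil => exact T_mem_Ja hx.1
    | cons e v =>
      rw [List.length_cons, Function.iterate_succ_apply, List.getLast_cons (List.cons_ne_nil _ _)]
      exact ih _ hx.2

theorem isOpen_Iw : IsOpen (E.Iw w) := by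
  induction w with
  | nil => rw [Iw_nil]; exact isOpen_Ioo
  | cons c w ih =>
    have : E.Iw (c :: w) = E.Ia c ∩ E.T ⁻¹' E.Iw w := Set.ext fun x => mem_Iw_cons
    exact this ▸ continuousOn_T.isOpen_inter_preimage isOpen_Ia ih

theorem ordConnected_Iw : (E.Iw w).OrdConnected := by
  induction w with
  | nil => rw [Iw_nil]; exact ordConnected_Ioo
  | cons c w ih =>
    refine ordConnected_iff_uIcc_subset.2 fun x hx y hy z hz => ?_
    rw [mem_Iw_cons] at hx hy ⊢
    exact ⟨ordConnected_Ia.uIcc_subset hx.1 hy.1 hz,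
      ih.uIcc_subset hx.2 hy.2 (T_mem_uIcc hx.1 hy.1 hz)⟩

theorem Iw_nonempty_of_mem_lang (h : w ∈ E.lang) : (E.Iw w).Nonempty := by
  obtain ⟨z, -, hz, k, hk⟩ := h
  obtain ⟨a, ha⟩ := mem_iUnion.1 (hz k)
  refine ⟨E.T^[k] z, Ia_subset_Ioo ha, fun i => ?_⟩
  rw [← Function.iterate_add_apply, add_comm]
  exact hk i

theorem singT_finite [Nontrivial A] : E.singT.Finite := by
  refine Set.finite_of_ncard_pos ?_
  rw [singT, E.hIcard]
  have := Fintype.one_lt_card (α := A)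
  omega

theorem countable_setOf_orbit_not_subset [Nontrivial A] :
    {x ∈ Ioo E.l E.r | ¬ ∀ n, E.T^[n] x ∈ ⋃ a, E.Ia a}.Countable := by
  have hcount : ∀ n, {x | (∀ i < n, E.T^[i] x ∈ ⋃ a, E.Ia a) ∧ E.T^[n] x ∈ E.singT}.Countable :=
    fun n => MapsTo.countable_of_injOn (fun x hx => hx.2) ((injOn_iterate n).mono fun x hx => hx.1)
      singT_finite.countable
  refine (countable_iUnion hcount).mono ?_
  classical
  rintro x ⟨hx, hreg⟩
  push Not at hreg
  have hmin : ∀ i < Nat.find hreg, E.T^[i] x ∈ ⋃ a, E.Ia a :=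
    fun i hi => not_not.1 (Nat.find_min hreg hi)
  exact mem_iUnion.2 ⟨Nat.find hreg, hmin, iterate_mem_Ioo hx hmin, Nat.find_spec hreg⟩

theorem mem_lang_iff_Iw_nonempty [Nontrivial A] : w ∈ E.lang ↔ (E.Iw w).Nonempty := by
  refine ⟨Iw_nonempty_of_mem_lang, fun h => ?_⟩
  obtain ⟨x, hx, hreg⟩ :=
    ((countable_setOf_orbit_not_subset (E := E)).dense_compl ℝ).inter_open_nonempty _ isOpen_Iw h
  exact ⟨x, hx.1, by simpa [hx.1.1, hx.1.2] using hreg, 0, by simpa using hx.2⟩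

/-- The components of `I` are the connected components of this set. -/
def punctured (E : IET A) : Set ℝ := Ioo E.l E.r \ {z | E.IsConnection z z 0}

theorem Ia_subset_punctured : E.Ia a ⊆ E.punctured :=
  fun _ hx => ⟨Ia_subset_Ioo hx, fun h => h.2.1.2 (mem_iUnion.2 ⟨a, hx⟩)⟩

theorem Ja_subset_punctured : E.Ja a ⊆ E.punctured :=
  fun _ hx => ⟨Ja_subset_Ioo hx, fun h => h.1.2 (mem_iUnion.2 ⟨a, hx⟩)⟩

theorem connectedComponentIn_punctured_eq_of_mem_Ia (hx : x ∈ E.Ia a) (hy : y ∈ E.Ia a) :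
    connectedComponentIn E.punctured x = connectedComponentIn E.punctured y :=
  connectedComponentIn_eq_of_isPreconnected ordConnected_Ia.isPreconnected Ia_subset_punctured
    hx hy

theorem connectedComponentIn_punctured_eq_of_mem_Ja (hx : x ∈ E.Ja a) (hy : y ∈ E.Ja a) :
    connectedComponentIn E.punctured x = connectedComponentIn E.punctured y :=
  connectedComponentIn_eq_of_isPreconnected ordConnected_Ja.isPreconnected Ja_subset_punctured
    hx hy

theorem image_connectedComponentIn_Ia (hx : x ∈ E.Ia a) :
    connectedComponentIn E.punctured '' E.Ia a = {connectedComponentIn E.punctured x} :=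
  image_connectedComponentIn_of_isPreconnected ordConnected_Ia.isPreconnected
    Ia_subset_punctured hx

theorem image_connectedComponentIn_Ja (hx : x ∈ E.Ja a) :
    connectedComponentIn E.punctured '' E.Ja a = {connectedComponentIn E.punctured x} :=
  image_connectedComponentIn_of_isPreconnected ordConnected_Ja.isPreconnected
    Ja_subset_punctured hx

def cell (E : IET A) (w : List A) : A ⊕ A → Set ℝ :=
  Sum.elim (fun c => E.Ja c ∩ E.Iw w) (fun d => E.Iw (w ++ [d]))

theorem isOpen_cell {u : A ⊕ A} : IsOpen (E.cell w u) := by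
  rcases u with c | d
  · exact isOpen_Ja.inter isOpen_Iw
  · exact isOpen_Iw

theorem cell_nonempty_iff [Nontrivial A] {u : A ⊕ A} :
    (E.cell w u).Nonempty ↔ u ∈ extVerts E.lang w := by
  rcases u with c | d
  · simp only [cell, extVerts, Sum.elim_inl, mem_ofPred_eq, ← image_T_Iw_cons, image_nonempty]
    exact mem_lang_iff_Iw_nonempty.symm
  · exact mem_lang_iff_Iw_nonempty.symm

theorem reachable_of_mem_cell [Nontrivial A] {u v : extVerts E.lang w}
    (hu : x ∈ E.cell w u) (hv : x ∈ E.cell w v) : (extGraph E.lang w).Reachable u v := by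
  have edge {c d : A} (hc : x ∈ E.cell w (Sum.inl c)) (hd : x ∈ E.cell w (Sum.inr d)) :
      c :: (w ++ [d]) ∈ E.lang := by
    refine mem_lang_iff_Iw_nonempty.2 ((image_nonempty (f := E.T)).1 ?_)
    rw [image_T_Iw_cons]
    exact ⟨x, hc.1, hd⟩
  obtain ⟨c | d, hu'⟩ := u <;> obtain ⟨c' | d', hv'⟩ := v
  · obtain rfl := eq_of_mem_Ja hu.1 hv.1
    rfl
  · exact (extGraph_adj_inl_inr (edge hu hv) hu' hv').reachable
  · exact (extGraph_adj_inl_inr (edge hv hu) hv' hu').reachable.symm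
  · obtain rfl := eq_of_mem_Ia (mem_Iw_append_singleton.1 hu).2 (mem_Iw_append_singleton.1 hv).2
    rfl

theorem exists_mem_cell [Nontrivial A] (hnc : ∀ x y : ℝ, ∀ n : ℕ, E.IsConnection x y n → n = 0)
    (hw : x ∈ E.Iw w) (hx : x ∈ E.punctured) : ∃ u : extVerts E.lang w, x ∈ E.cell w u := by
  have hcell : ∀ u, x ∈ E.cell w u → ∃ u : extVerts E.lang w, x ∈ E.cell w u :=
    fun u hu => ⟨⟨u, cell_nonempty_iff.1 ⟨x, hu⟩⟩, hu⟩
  by_cases hJ : x ∈ ⋃ c, E.Ja c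
  · obtain ⟨c, hc⟩ := mem_iUnion.1 hJ
    exact hcell (Sum.inl c) ⟨hc, hw⟩
  have hIw : ∀ i < w.length, E.T^[i] x ∈ ⋃ a, E.Ia a :=
    fun i hi => mem_iUnion.2 ⟨_, hw.2 ⟨i, hi⟩⟩
  by_cases hI : E.T^[w.length] x ∈ ⋃ a, E.Ia a
  · obtain ⟨d, hd⟩ := mem_iUnion.1 hI
    exact hcell (Sum.inr d) (mem_Iw_append_singleton.2 ⟨hw, hd⟩)
  -- otherwise `x` starts a connection of length `|w|`, which must be a point connection
  have hconn : E.IsConnection x _ w.length :=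
    ⟨⟨hw.1, hJ⟩, ⟨iterate_mem_Ioo hw.1 hIw, hI⟩, rfl, fun i hi hs => hs.2 (hIw i hi)⟩
  have hlen := hnc _ _ _ hconn
  rw [hlen] at hconn
  exact absurd hconn hx.2

theorem reachable_of_uIcc_subset [Nontrivial A]
    (hnc : ∀ x y : ℝ, ∀ n : ℕ, E.IsConnection x y n → n = 0)
    (hw : uIcc x y ⊆ E.Iw w) (hp : uIcc x y ⊆ E.punctured) {u v : extVerts E.lang w}
    (hx : x ∈ E.cell w u) (hy : y ∈ E.cell w v) : (extGraph E.lang w).Reachable u v := by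
  set G := extGraph E.lang w
  let cells (P : extVerts E.lang w → Prop) : Set ℝ := ⋃ (u') (_ : P u'), E.cell w u'
  have hopen (P) : IsOpen (cells P) := isOpen_biUnion fun _ _ => isOpen_cell
  have hcover : uIcc x y ⊆ cells (G.Reachable u) ∪ cells (¬ G.Reachable u ·) := by
    intro z hz
    obtain ⟨u', hu'⟩ := exists_mem_cell hnc (hw hz) (hp hz)
    by_cases h : G.Reachable u u'
    · exact Or.inl (mem_biUnion h hu')
    · exact Or.inr (mem_biUnion h hu')
  have hdisj : Disjoint (cells (G.Reachable u)) (cells (¬ G.Reachable u ·)) := by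
    refine disjoint_left.2 fun z hz hz' => ?_
    obtain ⟨u₁, h₁, hz₁⟩ := mem_iUnion₂.1 hz
    obtain ⟨u₂, h₂, hz₂⟩ := mem_iUnion₂.1 hz'
    exact h₂ (h₁.trans (reachable_of_mem_cell hz₁ hz₂))
  have hsub := isPreconnected_uIcc.subset_left_of_subset_union (hopen _) (hopen _) hdisj hcover
    ⟨x, left_mem_uIcc, mem_biUnion (SimpleGraph.Reachable.refl u) hx⟩
  obtain ⟨u', hu', hyu'⟩ := mem_iUnion₂.1 (hsub right_mem_uIcc)
  exact hu'.trans (reachable_of_mem_cell hyu' hy)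

theorem reachable_inl_iff (hnc : ∀ x y : ℝ, ∀ n : ℕ, E.IsConnection x y n → n = 0)
    (ha : a :: w ∈ E.lang) (hb : b :: w ∈ E.lang) :
    (extGraph E.lang w).Reachable ⟨Sum.inl a, ha⟩ ⟨Sum.inl b, hb⟩ ↔
      ∃ x ∈ E.Ja a, ∃ y ∈ E.Ja b,
        connectedComponentIn E.punctured x = connectedComponentIn E.punctured y := by
  constructor
  · intro h
    have hφ := extGraph_reachable_map_eq
      (Sum.elim (fun c => connectedComponentIn E.punctured '' E.Ja c)
        (fun d => connectedComponentIn E.punctured '' E.Ia ((w ++ [d]).head (by simp))))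
      (fun c d hcd => ?_) h
    · obtain ⟨x, hx⟩ := E.Ja_nonempty (a := a)
      obtain ⟨y, hy⟩ := E.Ja_nonempty (a := b)
      simp only [Sum.elim_inl, image_connectedComponentIn_Ja hx,
        image_connectedComponentIn_Ja hy, singleton_eq_singleton_iff] at hφ
      exact ⟨x, hx, y, hy, hφ⟩
    · obtain ⟨x, hx⟩ := Iw_nonempty_of_mem_lang hcd
      rw [mem_Iw_cons] at hx
      simp only [Sum.elim_inl, Sum.elim_inr, image_connectedComponentIn_Ja (T_mem_Ja hx.1),
        image_connectedComponentIn_Ia (Iw_subset_Ia_head _ hx.2)]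
  · rintro ⟨x, hx, y, hy, hxy⟩
    rcases eq_or_ne a b with rfl | hab
    · rfl
    have : Nontrivial A := ⟨⟨a, b, hab⟩⟩
    obtain ⟨p, hp⟩ := (cell_nonempty_iff (u := Sum.inl a)).2 ha
    obtain ⟨q, hq⟩ := (cell_nonempty_iff (u := Sum.inl b)).2 hb
    refine reachable_of_uIcc_subset hnc (ordConnected_Iw.uIcc_subset hp.2 hq.2)
      (uIcc_subset_of_connectedComponentIn_eq (Ja_subset_punctured hp.1)
        (Ja_subset_punctured hq.1) ?_) hp hq
    rw [connectedComponentIn_punctured_eq_of_mem_Ja hp.1 hx, hxy,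
      connectedComponentIn_punctured_eq_of_mem_Ja hy hq.1]

theorem reachable_inr_iff (hnc : ∀ x y : ℝ, ∀ n : ℕ, E.IsConnection x y n → n = 0)
    (ha : w ++ [a] ∈ E.lang) (hb : w ++ [b] ∈ E.lang) :
    (extGraph E.lang w).Reachable ⟨Sum.inr a, ha⟩ ⟨Sum.inr b, hb⟩ ↔
      ∃ x ∈ E.Ia a, ∃ y ∈ E.Ia b,
        connectedComponentIn E.punctured x = connectedComponentIn E.punctured y := by
  constructor
  · intro h
    have hφ := extGraph_reachable_map_eq
      (Sum.elim (fun c => connectedComponentIn E.punctured '' E.Ja ((c :: w).getLast (by simp)))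
        (fun d => connectedComponentIn E.punctured '' E.Ia d))
      (fun c d hcd => ?_) h
    · obtain ⟨x, hx⟩ := Iw_nonempty_of_mem_lang ha
      obtain ⟨y, hy⟩ := Iw_nonempty_of_mem_lang hb
      simp only [Sum.elim_inr, image_connectedComponentIn_Ia (mem_Iw_append_singleton.1 hx).2,
        image_connectedComponentIn_Ia (mem_Iw_append_singleton.1 hy).2,
        singleton_eq_singleton_iff] at hφ
      exact ⟨_, (mem_Iw_append_singleton.1 hx).2, _, (mem_Iw_append_singleton.1 hy).2, hφ⟩
    · obtain ⟨x, hx⟩ := Iw_nonempty_of_mem_lang hcd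
      rw [← List.cons_append, mem_Iw_append_singleton] at hx
      simp only [Sum.elim_inl, Sum.elim_inr,
        image_connectedComponentIn_Ja (iterate_mem_Ja_getLast (by simp) hx.1),
        image_connectedComponentIn_Ia hx.2]
  · rintro ⟨x, hx, y, hy, hxy⟩
    rcases eq_or_ne a b with rfl | hab
    · rfl
    have : Nontrivial A := ⟨⟨a, b, hab⟩⟩
    obtain ⟨p, hp⟩ := (cell_nonempty_iff (u := Sum.inr a)).2 ha
    obtain ⟨q, hq⟩ := (cell_nonempty_iff (u := Sum.inr b)).2 hb
    have hpq : connectedComponentIn E.punctured p = connectedComponentIn E.punctured q := by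
      rcases w with _ | ⟨e, w⟩
      · simp only [cell, Sum.elim_inr, List.nil_append, mem_Iw_singleton] at hp hq
        rw [connectedComponentIn_punctured_eq_of_mem_Ia hp hx, hxy,
          connectedComponentIn_punctured_eq_of_mem_Ia hy hq]
      · exact connectedComponentIn_punctured_eq_of_mem_Ia (mem_Iw_cons.1 hp).1
          (mem_Iw_cons.1 hq).1
    refine reachable_of_uIcc_subset hnc
      (ordConnected_Iw.uIcc_subset (mem_Iw_append_singleton.1 hp).1
        (mem_Iw_append_singleton.1 hq).1)
      (uIcc_subset_of_connectedComponentIn_eq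
        (Ia_subset_punctured (Iw_subset_Ia_head (by simp) hp))
        (Ia_subset_punctured (Iw_subset_Ia_head (by simp) hq)) hpq) hp hq

end IET

end Paper

open Paper Paper.IET in
/-- Let `T` be an interval exchange transformation without connection of length `≥ 1`,
and let `C` be the set of its (length-0) connection points. For `w ∈ L(T)` and
`a, b ∈ L(w)` (resp. `a, b ∈ R(w)`), the vertices `1 ⊗ a` and `1 ⊗ b` (resp. `a ⊗ 1`
and `b ⊗ 1`) are in the same connected component of the extension graph `E(w)` iff
`J_a` and `J_b` (resp. `I_a` and `I_b`) are in the same component of `I`,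
i.e. the same connected component of `]l, r[` minus the connection points. -/
theorem same_component_iff
    {A : Type*} [Fintype A] (E : IET A)
    (hnc : ∀ x y : ℝ, ∀ n : ℕ, E.IsConnection x y n → n = 0) :
    ∀ w ∈ E.lang,
      (∀ a b : A, ∀ (ha : a :: w ∈ E.lang) (hb : b :: w ∈ E.lang),
        ((extGraph E.lang w).Reachable
            ⟨Sum.inl a, ha⟩ ⟨Sum.inl b, hb⟩ ↔
          ∃ x ∈ E.Ja a, ∃ y ∈ E.Ja b,
            connectedComponentIn
                (Set.Ioo E.l E.r \ {z : ℝ | E.IsConnection z z 0}) x =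
              connectedComponentIn
                (Set.Ioo E.l E.r \ {z : ℝ | E.IsConnection z z 0}) y)) ∧
      (∀ a b : A, ∀ (ha : w ++ [a] ∈ E.lang) (hb : w ++ [b] ∈ E.lang),
        ((extGraph E.lang w).Reachable
            ⟨Sum.inr a, ha⟩ ⟨Sum.inr b, hb⟩ ↔
          ∃ x ∈ E.Ia a, ∃ y ∈ E.Ia b,
            connectedComponentIn
                (Set.Ioo E.l E.r \ {z : ℝ | E.IsConnection z z 0}) x =
              connectedComponentIn
                (Set.Ioo E.l E.r \ {z : ℝ | E.IsConnection z z 0}) y)) := by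
  intro w _
  exact ⟨fun a b ha hb => reachable_inl_iff hnc ha hb, fun a b ha hb => reachable_inr_iff hnc ha hb⟩
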